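/- Let G be a locally compact, σ-compact IN group (with the fixed neighborhood V invariant under inner automorphisms), let E be a solid, translation invariant BF space on G, let w be an admissible weight for E, and let Λ be a discrete, closed subgroup of G (hence relatively separated). Then E_d(Λ) is a right module over the convolution algebra ℓ¹_w(Λ): for c ∈ E_d(Λ) and a ∈ ℓ¹_w(Λ), the convolution (c*a)_λ = Σ_{μ∈Λ} c_μ a_{μ⁻¹λ} belongs to E_d(Λ) and ‖c*a‖_{E_d} ≤ C ‖c‖_{E_d} ‖a‖_{ℓ¹_w}. -/

import Mathlib

open MeasureTheory ENNReal Filter Set Pointwise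

noncomputable section

namespace CoorbitCovers

variable {G : Type*}

/-- The group setting: a locally compact, σ-compact group `G` together with a left Haar
measure `μ`, its modular function `Δ`, and a fixed symmetric relatively compact
neighborhood `V` of the identity. -/
structure GroupSetting (G : Type*) [Group G] [TopologicalSpace G] [MeasurableSpace G] where
  μ : Measure G
  haar : μ.IsHaarMeasure
  Δ : G → ℝ
  Δ_pos : ∀ x, 0 < Δ x
  Δ_hom : ∀ x y, Δ (x * y) = Δ x * Δ y
  Δ_spec : ∀ (x : G) (s : Set G), MeasurableSet s →
    μ ((fun y => y * x) '' s) = ENNReal.ofReal (Δ x) * μ s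
  V : Set G
  V_meas : MeasurableSet V
  V_symm : V⁻¹ = V
  V_nhds : V ∈ nhds (1 : G)
  V_relCompact : IsCompact (closure V)

variable [Group G] [TopologicalSpace G] [IsTopologicalGroup G]
  [LocallyCompactSpace G] [SigmaCompactSpace G] [MeasurableSpace G] [BorelSpace G]

/-- `enn f x = ‖f x‖` as an extended nonnegative real. -/
def enn (f : G → ℂ) : G → ℝ≥0∞ := fun x => (‖f x‖₊ : ℝ≥0∞)

/-- Convolution of two extended-nonnegative functions: `f*g(x) = ∫ f(y) g(y⁻¹x) dy`. -/
def convE (GS : GroupSetting G) (f g : G → ℝ≥0∞) : G → ℝ≥0∞ :=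
  fun x => ∫⁻ y, f y * g (y⁻¹ * x) ∂GS.μ

/-- Convolution of two complex functions: `f*g(x) = ∫ f(y) g(y⁻¹x) dy`. -/
def convC (GS : GroupSetting G) (f g : G → ℂ) : G → ℂ :=
  fun x => ∫ y, f y * g (y⁻¹ * x) ∂GS.μ

/-- The `L²`-type pairing `⟨f,h⟩ = ∫ f(x) conj (h(x)) dx`. -/
def pairing (GS : GroupSetting G) (f h : G → ℂ) : ℂ :=
  ∫ x, f x * (starRingEnd ℂ) (h x) ∂GS.μ

/-- The left local maximum function `f^#(x) = esssup_{y ∈ V} f(xy)`. -/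
def sharpL (GS : GroupSetting G) (f : G → ℝ≥0∞) : G → ℝ≥0∞ :=
  fun x => essSup (fun y => f (x * y)) (GS.μ.restrict GS.V)

/-- The right local maximum function `f_#(x) = esssup_{y ∈ V} f(yx)`. -/
def sharpR (GS : GroupSetting G) (f : G → ℝ≥0∞) : G → ℝ≥0∞ :=
  fun x => essSup (fun y => f (y * x)) (GS.μ.restrict GS.V)

/-- The norm of `L¹_w`: `∫ f(x) w(x) dx`. -/
def L1wNorm (GS : GroupSetting G) (w : G → ℝ) (f : G → ℝ≥0∞) : ℝ≥0∞ :=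
  ∫⁻ x, f x * ENNReal.ofReal (w x) ∂GS.μ

/-- The norm of `L^∞`. -/
def LinfNorm (GS : GroupSetting G) (f : G → ℝ≥0∞) : ℝ≥0∞ := essSup f GS.μ

/-- The norm of `L^∞_{1/w}`: `esssup f(x)/w(x)`. -/
def LinfwInvNorm (GS : GroupSetting G) (w : G → ℝ) (f : G → ℝ≥0∞) : ℝ≥0∞ :=
  essSup (fun x => f x / ENNReal.ofReal (w x)) GS.μ

/-- The norm of the amalgam space `W(L^∞, L¹_w)`, namely `‖f^#‖_{L¹_w}`. -/
def W_Linf_L1w (GS : GroupSetting G) (w : G → ℝ) (f : G → ℝ≥0∞) : ℝ≥0∞ :=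
  L1wNorm GS w (sharpL GS f)

/-- The norm of the right amalgam space `W_R(L^∞, L¹_w)`, namely `‖f_#‖_{L¹_w}`. -/
def WR_Linf_L1w (GS : GroupSetting G) (w : G → ℝ) (f : G → ℝ≥0∞) : ℝ≥0∞ :=
  L1wNorm GS w (sharpR GS f)

/-- The norm of the unweighted amalgam space `W(L^∞, L¹)`. -/
def W_Linf_L1 (GS : GroupSetting G) (f : G → ℝ≥0∞) : ℝ≥0∞ := ∫⁻ x, sharpL GS f x ∂GS.μ

/-- The norm of the unweighted right amalgam space `W_R(L^∞, L¹)`. -/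
def WR_Linf_L1 (GS : GroupSetting G) (f : G → ℝ≥0∞) : ℝ≥0∞ := ∫⁻ x, sharpR GS f x ∂GS.μ

/-- The norm of `W(L¹, L^∞_{1/w})`: `esssup_x ‖f χ_{xV}‖_{L¹} / w(x)`. -/
def W_L1_Linfw (GS : GroupSetting G) (w : G → ℝ) (f : G → ℝ≥0∞) : ℝ≥0∞ :=
  essSup (fun x => (∫⁻ y in x • GS.V, f y ∂GS.μ) / ENNReal.ofReal (w x)) GS.μ

/-- The norm of the unweighted `W(L¹, L^∞)`. -/
def W_L1_Linf (GS : GroupSetting G) (f : G → ℝ≥0∞) : ℝ≥0∞ :=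
  essSup (fun x => ∫⁻ y in x • GS.V, f y ∂GS.μ) GS.μ

/-- The characteristic function of `V`, with values in `ℝ≥0∞`. -/
def chiV (GS : GroupSetting G) : G → ℝ≥0∞ := GS.V.indicator 1

/-- The norm of the left weak amalgam space `W^weak(L^∞,L¹_w)`: `‖χ_V * f‖_{W(L^∞,L¹_w)}`. -/
def Wweak_Linf_L1w (GS : GroupSetting G) (w : G → ℝ) (f : G → ℝ≥0∞) : ℝ≥0∞ :=
  W_Linf_L1w GS w (convE GS (chiV GS) f)

/-- The norm of the right weak amalgam space `W_R^weak(L^∞,L¹_w)`: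
`‖f * χ_V‖_{W_R(L^∞,L¹_w)}`. -/
def WRweak_Linf_L1w (GS : GroupSetting G) (w : G → ℝ) (f : G → ℝ≥0∞) : ℝ≥0∞ :=
  WR_Linf_L1w GS w (convE GS f (chiV GS))

/-- The norm of the strong amalgam space `W^st(L^∞,L¹_w) = W_R(L^∞, W(L^∞,L¹_w))`:
`‖(f_#)^#‖_{L¹_w}`. -/
def Wst_Linf_L1w (GS : GroupSetting G) (w : G → ℝ) (f : G → ℝ≥0∞) : ℝ≥0∞ :=
  L1wNorm GS w (sharpL GS (sharpR GS f))

/-- A solid BF space on `G`, modelled by its (solid) function norm `N` acting on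
extended-nonnegative functions. The norm of a complex function `f` is `N (enn f)`.
The fields record: solidity (monotonicity), the norm axioms, nondegeneracy,
the continuous embedding into `L¹_loc`, and completeness (Banach). -/
structure BFSpace (GS : GroupSetting G) where
  N : (G → ℝ≥0∞) → ℝ≥0∞
  mono : ∀ f g : G → ℝ≥0∞, (∀ᵐ x ∂GS.μ, f x ≤ g x) → N f ≤ N g
  add_le : ∀ f g : G → ℝ≥0∞, N (fun x => f x + g x) ≤ N f + N g
  smul_eq : ∀ (c : ℝ≥0∞) (f : G → ℝ≥0∞), N (fun x => c * f x) = c * N f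
  eq_zero : ∀ f : G → ℝ≥0∞, Measurable f → N f = 0 → f =ᵐ[GS.μ] 0
  loc_embed : ∀ K : Set G, IsCompact K → ∃ C : ℝ≥0∞, C ≠ ⊤ ∧
      ∀ f : G → ℝ≥0∞, Measurable f → (∫⁻ x in K, f x ∂GS.μ) ≤ C * N f
  complete : ∀ u : ℕ → G → ℂ, (∀ n, AEStronglyMeasurable (u n) GS.μ) →
      (∀ n, N (enn (u n)) ≠ ⊤) →
      (∀ ε : ℝ≥0∞, 0 < ε → ∃ n₀ : ℕ, ∀ m ≥ n₀, ∀ n ≥ n₀,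
          N (enn (fun x => u m x - u n x)) < ε) →
      ∃ f : G → ℂ, AEStronglyMeasurable f GS.μ ∧ N (enn f) ≠ ⊤ ∧
        Tendsto (fun n => N (enn (fun x => u n x - f x))) atTop (nhds 0)

/-- Membership in a BF space. -/
def BFSpace.Mem {GS : GroupSetting G} (E : BFSpace GS) (f : G → ℂ) : Prop :=
  AEStronglyMeasurable f GS.μ ∧ E.N (enn f) ≠ ⊤

/-- The norm of the amalgam space `W(L^∞, E)`, namely `‖f^#‖_E`. -/
def W_Linf_E (GS : GroupSetting G) (E : BFSpace GS) (f : G → ℝ≥0∞) : ℝ≥0∞ :=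
  E.N (sharpL GS f)

/-- A BF space is translation invariant when left and right translations act boundedly
on it. -/
structure IsTI (GS : GroupSetting G) (E : BFSpace GS) : Prop where
  left : ∀ x : G, ∃ C : ℝ≥0∞, C ≠ ⊤ ∧ ∀ f, E.N (fun y => f (x⁻¹ * y)) ≤ C * E.N f
  right : ∀ x : G, ∃ C : ℝ≥0∞, C ≠ ⊤ ∧ ∀ f, E.N (fun y => f (y * x)) ≤ C * E.N f

/-- An admissible weight on `G`: locally bounded, positive, `w(x) = Δ(x⁻¹) w(x⁻¹)`
and submultiplicative. -/
structure IsAdmissibleWeight (GS : GroupSetting G) (w : G → ℝ) : Prop where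
  pos : ∀ x, 0 < w x
  locBdd : ∀ K : Set G, IsCompact K → ∃ M : ℝ, ∀ x ∈ K, w x ≤ M
  delta_rel : ∀ x, w x = GS.Δ x⁻¹ * w x⁻¹
  submul : ∀ x y, w (x * y) ≤ w x * w y

/-- `w` is an admissible weight for the solid translation invariant BF space `E`, with
admissibility constant `C`: the weight dominates (with constant `C`) the operator norms
of left and right translations, and `E` is an `L¹_w`-convolution module on both sides. -/
structure IsAdmissibleFor (GS : GroupSetting G) (w : G → ℝ) (E : BFSpace GS) (C : ℝ) :
    Prop where
  adm : IsAdmissibleWeight GS w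
  C_pos : 0 < C
  transL : ∀ (x : G) (f : G → ℝ≥0∞),
      E.N (fun y => f (x⁻¹ * y)) ≤ ENNReal.ofReal (w x / C) * E.N f
  transL' : ∀ (x : G) (f : G → ℝ≥0∞),
      E.N (fun y => f (x * y)) ≤ ENNReal.ofReal (w x / C) * E.N f
  transR : ∀ (x : G) (f : G → ℝ≥0∞),
      E.N (fun y => f (y * x)) ≤ ENNReal.ofReal (w x / C) * E.N f
  transR' : ∀ (x : G) (f : G → ℝ≥0∞),
      E.N (fun y => f (y * x⁻¹)) ≤ ENNReal.ofReal (GS.Δ x * (w x / C)) * E.N f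
  convL : ∀ g f : G → ℝ≥0∞,
      E.N (convE GS g f) ≤ ENNReal.ofReal (1 / C) * L1wNorm GS w g * E.N f
  convR : ∀ f g : G → ℝ≥0∞,
      E.N (convE GS f g) ≤ ENNReal.ofReal (1 / C) * E.N f * L1wNorm GS w g

/-- `Λ` is relatively separated with spreadness (at most) `n`:
every left translate of `V` contains at most `n` points of `Λ`. -/
def RelSep (GS : GroupSetting G) (Λ : Set G) (n : ℕ) : Prop :=
  ∀ x : G, (Λ ∩ x • GS.V).encard ≤ (n : ℕ∞)

/-- The norm of the discrete space `E_d(Λ)`: `‖Σ_λ |c_λ| χ_{λV}‖_E`. -/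
def EdNorm (GS : GroupSetting G) (E : BFSpace GS) (Λ : Set G) (c : Λ → ℂ) : ℝ≥0∞ :=
  E.N (fun x => ∑' l : Λ, ((l : G) • GS.V).indicator (fun _ => (‖c l‖₊ : ℝ≥0∞)) x)

/-- The norm of the `B`-valued discrete space `E_{d,B}(Λ)`:
`‖Σ_λ ‖c_λ‖_B χ_{λV}‖_E`. -/
def EdBNorm (GS : GroupSetting G) (E B : BFSpace GS) (Λ : Set G) (c : Λ → G → ℂ) : ℝ≥0∞ :=
  E.N (fun x => ∑' l : Λ, ((l : G) • GS.V).indicator (fun _ => B.N (enn (c l))) x)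

end CoorbitCovers

/-!
Write `F = Σ_μ |c_μ| χ_{μV}`, so that `‖c‖_{E_d} = ‖F‖_E`. Since `xV = Vx` for every `x` (the IN
condition), reindexing `λ = μν` over the subgroup bounds `Σ_λ |(c * a)_λ| χ_{λV}(x)` by the
discrete right convolution `Σ_ν |a_ν| F(xν⁻¹)`. Covering `V V` by finitely many right translates
`Vq`, `q ∈ t`, gives `F(z) μ(V) ≤ ∫_{zV} f` for `f = Σ_{q ∈ t} F(· q⁻¹)`, and this turns the
discrete convolution into `μ(V)⁻¹ (f * g)(x)` with `g = Σ_ν |a_ν| χ_{νV}`. Finally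
`‖f‖_E ≲ ‖F‖_E` by right translation invariance, `E * L¹_w ⊆ E`, and submultiplicativity of `w`
gives `‖g‖_{L¹_w} ≤ μ(V) (sup_V w) ‖a‖_{ℓ¹_w}`.
-/

namespace CoorbitCovers

variable {G : Type*} [Group G] [TopologicalSpace G] [MeasurableSpace G]

namespace GroupSetting

variable (GS : GroupSetting G)

theorem inv_mem_V_iff {u : G} : u⁻¹ ∈ GS.V ↔ u ∈ GS.V := by
  rw [← Set.mem_inv, GS.V_symm]

theorem measure_V_ne_zero : GS.μ GS.V ≠ 0 := by
  have := GS.haar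
  have h1 : (1 : G) ∈ interior GS.V := mem_interior_iff_mem_nhds.mpr GS.V_nhds
  exact ((isOpen_interior.measure_pos GS.μ ⟨1, h1⟩).trans_le
    (measure_mono interior_subset)).ne'

theorem measure_V_ne_top : GS.μ GS.V ≠ ⊤ :=
  have := GS.haar
  ((measure_mono subset_closure).trans_lt GS.V_relCompact.measure_lt_top).ne

theorem measure_smul_V (z : G) : GS.μ (z • GS.V) = GS.μ GS.V :=
  have := GS.haar
  measure_smul (μ := GS.μ) z GS.V

theorem measurableSet_smul_V [MeasurableMul G] (z : G) : MeasurableSet (z • GS.V) :=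
  GS.V_meas.const_smul z

theorem exists_finset_cover_V_mul_V [ContinuousMul G] :
    ∃ t : Finset G, ∀ z ∈ GS.V * GS.V, ∃ q ∈ t, z * q⁻¹ ∈ GS.V := by
  have h1 : (1 : G) ∈ interior GS.V := mem_interior_iff_mem_nhds.mpr GS.V_nhds
  obtain ⟨t, ht⟩ := (GS.V_relCompact.mul GS.V_relCompact).elim_finite_subcover
    (fun q : G => (· * q) '' interior GS.V)
    (fun q => (Homeomorph.mulRight q).isOpenMap _ isOpen_interior)
    (fun z _ => mem_iUnion.mpr ⟨z, 1, h1, one_mul z⟩)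
  refine ⟨t, fun z hz => ?_⟩
  obtain ⟨q, hq, u, hu, rfl⟩ :=
    mem_iUnion₂.mp (ht (mul_subset_mul subset_closure subset_closure hz))
  exact ⟨q, hq, by simpa using interior_subset hu⟩

theorem countable_of_relSep [ContinuousConstSMul G G] [SigmaCompactSpace G] {Λ : Set G} {n : ℕ}
    (hsep : RelSep GS Λ n) : Λ.Countable := by
  have h1 : (1 : G) ∈ interior GS.V := mem_interior_iff_mem_nhds.mpr GS.V_nhds
  rw [← inter_univ Λ, ← iUnion_compactCovering G, inter_iUnion]
  refine countable_iUnion fun k => Finite.countable ?_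
  obtain ⟨s, hs⟩ := (isCompact_compactCovering G k).elim_finite_subcover
    (fun x : G => x • interior GS.V) (fun x => isOpen_interior.smul x)
    (fun x _ => mem_iUnion.mpr ⟨x, mem_smul_set.mpr ⟨1, h1, mul_one x⟩⟩)
  refine ((s.finite_toSet.biUnion fun x _ => finite_of_encard_le_coe (hsep x)).subset ?_)
  rintro y ⟨hyΛ, hyK⟩
  obtain ⟨x, hx, hyx⟩ := mem_iUnion₂.mp (hs hyK)
  exact mem_iUnion₂.mpr ⟨x, hx, hyΛ, smul_set_mono interior_subset hyx⟩

end GroupSetting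

section IN

variable {GS : GroupSetting G} (hIN : ∀ x : G, (fun y => x * y * x⁻¹) '' GS.V = GS.V)
include hIN

theorem conj_mem_V_iff (x u : G) : x * u * x⁻¹ ∈ GS.V ↔ u ∈ GS.V := by
  refine ⟨fun hu => ?_, fun hu => hIN x ▸ ⟨u, hu, rfl⟩⟩
  rw [← hIN x⁻¹]
  exact ⟨_, hu, by group⟩

theorem mem_mul_smul_V_iff (p n x : G) : x ∈ (p * n) • GS.V ↔ x * n⁻¹ ∈ p • GS.V := by
  rw [mem_smul_set_iff_inv_smul_mem, mem_smul_set_iff_inv_smul_mem, smul_eq_mul, smul_eq_mul,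
    ← conj_mem_V_iff hIN n]
  congr! 1
  group

theorem inv_mul_mem_smul_V_iff (n x y : G) : y⁻¹ * x ∈ n • GS.V ↔ y ∈ (x * n⁻¹) • GS.V := by
  rw [mem_smul_set_iff_inv_smul_mem, mem_smul_set_iff_inv_smul_mem, smul_eq_mul, smul_eq_mul,
    ← GS.inv_mem_V_iff, ← conj_mem_V_iff hIN n⁻¹ ((x * n⁻¹)⁻¹ * y)]
  congr! 1
  group

theorem indicator_const_mul_smul_V (r : ℝ≥0∞) (p n x : G) :
    ((p * n) • GS.V).indicator (fun _ => r) x = (p • GS.V).indicator (fun _ => r) (x * n⁻¹) := by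
  classical
  simp only [indicator_apply, mem_mul_smul_V_iff hIN]

end IN

def indicatorSum (GS : GroupSetting G) (Λ : Set G) (α : Λ → ℝ≥0∞) : G → ℝ≥0∞ :=
  fun x => ∑' l : Λ, ((l : G) • GS.V).indicator (fun _ => α l) x

theorem edNorm_eq_indicatorSum (GS : GroupSetting G) (E : BFSpace GS) (Λ : Set G) (c : Λ → ℂ) :
    EdNorm GS E Λ c = E.N (indicatorSum GS Λ fun l => ‖c l‖₊) :=
  rfl

section IndicatorSum

variable {GS : GroupSetting G} {Λ : Set G}

theorem indicatorSum_le_sum_translate {t : Finset G}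
    (ht : ∀ z ∈ GS.V * GS.V, ∃ q ∈ t, z * q⁻¹ ∈ GS.V) (α : Λ → ℝ≥0∞) {y z : G}
    (hy : y ∈ z • GS.V) :
    indicatorSum GS Λ α z ≤ ∑ q ∈ t, indicatorSum GS Λ α (y * q⁻¹) := by
  unfold indicatorSum
  rw [← Summable.tsum_finsetSum fun _ _ => ENNReal.summable]
  refine ENNReal.tsum_le_tsum fun m => ?_
  by_cases hz : z ∈ (m : G) • GS.V
  · obtain ⟨q, hq, hyq⟩ : ∃ q ∈ t, y * q⁻¹ ∈ (m : G) • GS.V := by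
      obtain ⟨v', hv', rfl⟩ := hz
      obtain ⟨v, hv, rfl⟩ := hy
      obtain ⟨q, hq, hvq⟩ := ht (v' * v) (mul_mem_mul hv' hv)
      exact ⟨q, hq, _, hvq, by simp only [smul_eq_mul, mul_assoc]⟩
    rw [indicator_of_mem hz]
    calc α m = ((m : G) • GS.V).indicator (fun _ => α m) (y * q⁻¹) :=
          (indicator_of_mem hyq (fun _ => α m)).symm
      _ ≤ _ := Finset.single_le_sum (f := fun q => ((m : G) • GS.V).indicator _ (y * q⁻¹))
          (fun _ _ => zero_le) hq
  · simp [indicator_of_notMem hz]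

variable [MeasurableMul G]

theorem measurable_indicatorSum [Countable Λ] (α : Λ → ℝ≥0∞) :
    Measurable (indicatorSum GS Λ α) :=
  Measurable.tsum fun _ => measurable_const.indicator (GS.measurableSet_smul_V _)

theorem lintegral_indicatorSum [Countable Λ] (γ : Λ → ℝ≥0∞) :
    ∫⁻ x, indicatorSum GS Λ γ x ∂GS.μ = (∑' n, γ n) * GS.μ GS.V := by
  unfold indicatorSum
  rw [lintegral_tsum fun n =>
    (measurable_const.indicator (GS.measurableSet_smul_V _)).aemeasurable, ← ENNReal.tsum_mul_right]
  refine tsum_congr fun n => ?_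
  rw [lintegral_indicator_const (GS.measurableSet_smul_V _), GS.measure_smul_V]

theorem indicatorSum_mul_measure_V_le {t : Finset G}
    (ht : ∀ z ∈ GS.V * GS.V, ∃ q ∈ t, z * q⁻¹ ∈ GS.V) (α : Λ → ℝ≥0∞) (z : G) :
    indicatorSum GS Λ α z * GS.μ GS.V ≤
      ∫⁻ y in z • GS.V, ∑ q ∈ t, indicatorSum GS Λ α (y * q⁻¹) ∂GS.μ :=
  calc indicatorSum GS Λ α z * GS.μ GS.V
      = ∫⁻ _ in z • GS.V, indicatorSum GS Λ α z ∂GS.μ := by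
        rw [setLIntegral_const, GS.measure_smul_V]
    _ ≤ _ := setLIntegral_mono' (GS.measurableSet_smul_V z) fun _ hy =>
        indicatorSum_le_sum_translate ht α hy

theorem convE_indicatorSum (hIN : ∀ x : G, (fun y => x * y * x⁻¹) '' GS.V = GS.V)
    [Countable Λ] {f : G → ℝ≥0∞} (hf : Measurable f) (β : Λ → ℝ≥0∞) (x : G) :
    convE GS f (indicatorSum GS Λ β) x =
      ∑' n : Λ, β n * ∫⁻ y in (x * (n : G)⁻¹) • GS.V, f y ∂GS.μ := by
  have hsplit : ∀ y, f y * indicatorSum GS Λ β (y⁻¹ * x) =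
      ∑' n : Λ, β n * ((x * (n : G)⁻¹) • GS.V).indicator f y := by
    intro y
    rw [indicatorSum, ← ENNReal.tsum_mul_left]
    refine tsum_congr fun n => ?_
    by_cases hy : y ∈ (x * (n : G)⁻¹) • GS.V
    · rw [indicator_of_mem hy, indicator_of_mem ((inv_mul_mem_smul_V_iff hIN _ _ _).2 hy),
        mul_comm]
    · rw [indicator_of_notMem hy,
        indicator_of_notMem (mt (inv_mul_mem_smul_V_iff hIN _ _ _).1 hy), mul_zero, mul_zero]
  have hmeas : ∀ n : Λ, Measurable (((x * (n : G)⁻¹) • GS.V).indicator f) := fun n =>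
    hf.indicator (GS.measurableSet_smul_V _)
  rw [convE, lintegral_congr hsplit, lintegral_tsum fun n => ((hmeas n).const_mul _).aemeasurable]
  refine tsum_congr fun n => ?_
  rw [lintegral_const_mul _ (hmeas n), lintegral_indicator (GS.measurableSet_smul_V _)]

end IndicatorSum

section Weighted

variable {GS : GroupSetting G} {Λ : Set G} {w : G → ℝ}
  (hw : IsAdmissibleWeight GS w) {M : ℝ} (hM : ∀ u ∈ GS.V, w u ≤ M)
include hw hM

theorem indicatorSum_mul_weight_le (β : Λ → ℝ≥0∞) (x : G) :
    indicatorSum GS Λ β x * ENNReal.ofReal (w x) ≤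
      indicatorSum GS Λ (fun n => β n * ENNReal.ofReal (w n * M)) x := by
  rw [indicatorSum, ← ENNReal.tsum_mul_right]
  refine ENNReal.tsum_le_tsum fun n => ?_
  by_cases hx : x ∈ (n : G) • GS.V
  · obtain ⟨v, hv, rfl⟩ := hx
    rw [indicator_of_mem (smul_mem_smul_set hv), indicator_of_mem (smul_mem_smul_set hv)]
    exact mul_le_mul_right (ENNReal.ofReal_le_ofReal ((hw.submul n v).trans
      (mul_le_mul_of_nonneg_left (hM v hv) (hw.pos n).le))) _
  · simp [indicator_of_notMem hx]

theorem L1wNorm_indicatorSum_le [MeasurableMul G] [Countable Λ] (β : Λ → ℝ≥0∞) :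
    L1wNorm GS w (indicatorSum GS Λ β) ≤
      (∑' n : Λ, β n * ENNReal.ofReal (w n)) * ENNReal.ofReal M * GS.μ GS.V :=
  calc L1wNorm GS w (indicatorSum GS Λ β)
      ≤ ∫⁻ x, indicatorSum GS Λ (fun n => β n * ENNReal.ofReal (w n * M)) x ∂GS.μ :=
        lintegral_mono (indicatorSum_mul_weight_le hw hM β)
    _ = _ := by
        rw [lintegral_indicatorSum (GS := GS)]
        congr 1
        rw [← ENNReal.tsum_mul_right]
        refine tsum_congr fun n => ?_
        rw [ENNReal.ofReal_mul (hw.pos _).le, mul_assoc]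

end Weighted

theorem indicatorSum_conv_le {GS : GroupSetting G}
    (hIN : ∀ x : G, (fun y => x * y * x⁻¹) '' GS.V = GS.V) (Λ : Subgroup G) (c a : G → ℂ)
    (x : G) :
    indicatorSum GS Λ (fun l => ‖∑' m : (Λ : Set G), c m * a ((m : G)⁻¹ * l)‖₊) x ≤
      ∑' n : (Λ : Set G), ‖a n‖₊ * indicatorSum GS Λ (fun m => ‖c m‖₊) (x * (n : G)⁻¹) :=
  calc indicatorSum GS Λ (fun l => ‖∑' m : (Λ : Set G), c m * a ((m : G)⁻¹ * l)‖₊) x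
      ≤ ∑' l : (Λ : Set G), ∑' m : (Λ : Set G),
          ((l : G) • GS.V).indicator (fun _ => ‖c m‖₊ * (‖a ((m : G)⁻¹ * l)‖₊ : ℝ≥0∞)) x := by
        refine ENNReal.tsum_le_tsum fun l => ?_
        by_cases hx : x ∈ (l : G) • GS.V
        · simp only [indicator_of_mem hx]
          simpa only [enorm_eq_nnnorm, nnnorm_mul, ENNReal.coe_mul] using
            enorm_tsum_le_tsum_enorm (f := fun m : (Λ : Set G) => c m * a ((m : G)⁻¹ * l))
        · simp [indicator_of_notMem hx]
    _ = ∑' m : (Λ : Set G), ∑' n : (Λ : Set G),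
          (((m : G) * n) • GS.V).indicator (fun _ => ‖c m‖₊ * (‖a n‖₊ : ℝ≥0∞)) x := by
        rw [ENNReal.tsum_comm]
        refine tsum_congr fun m => ?_
        rw [← (Equiv.mulLeft (m : Λ)).tsum_eq]
        simp
    _ = ∑' n : (Λ : Set G), ‖a n‖₊ * indicatorSum GS Λ (fun m => ‖c m‖₊) (x * (n : G)⁻¹) := by
        rw [ENNReal.tsum_comm]
        refine tsum_congr fun n => ?_
        rw [indicatorSum, ← ENNReal.tsum_mul_left]
        refine tsum_congr fun m => ?_
        rw [indicator_const_mul_smul_V hIN, indicator_mul_left]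
        exact mul_comm _ _

theorem measure_V_mul_indicatorSum_conv_le [MeasurableMul G] {GS : GroupSetting G}
    (hIN : ∀ x : G, (fun y => x * y * x⁻¹) '' GS.V = GS.V) (Λ : Subgroup G) [Countable Λ]
    {t : Finset G} (ht : ∀ z ∈ GS.V * GS.V, ∃ q ∈ t, z * q⁻¹ ∈ GS.V) (c a : G → ℂ) (x : G) :
    GS.μ GS.V * indicatorSum GS Λ (fun l => ‖∑' m : (Λ : Set G), c m * a ((m : G)⁻¹ * l)‖₊) x ≤
      convE GS (fun y => ∑ q ∈ t, indicatorSum GS Λ (fun m => ‖c m‖₊) (y * q⁻¹))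
        (indicatorSum GS Λ fun n => ‖a n‖₊) x := by
  set F := indicatorSum GS Λ fun m => ‖c m‖₊
  have hf : Measurable fun y => ∑ q ∈ t, F (y * q⁻¹) :=
    Finset.measurable_sum t fun q _ => (measurable_indicatorSum _).comp (measurable_mul_const _)
  calc _ ≤ GS.μ GS.V * ∑' n : (Λ : Set G), ‖a n‖₊ * F (x * (n : G)⁻¹) :=
        mul_le_mul_right (indicatorSum_conv_le hIN Λ c a x) _
    _ = ∑' n : (Λ : Set G), ‖a n‖₊ * (F (x * (n : G)⁻¹) * GS.μ GS.V) := by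
        rw [← ENNReal.tsum_mul_left]
        exact tsum_congr fun n => by ring
    _ ≤ ∑' n : (Λ : Set G), ‖a n‖₊ * ∫⁻ y in (x * (n : G)⁻¹) • GS.V, ∑ q ∈ t, F (y * q⁻¹) ∂GS.μ :=
        ENNReal.tsum_le_tsum fun n => mul_le_mul_right (indicatorSum_mul_measure_V_le ht _ _) _
    _ = _ := (convE_indicatorSum hIN hf _ x).symm

namespace BFSpace

variable {GS : GroupSetting G} (E : BFSpace GS)

theorem N_zero : E.N (fun _ => 0) = 0 := by
  simpa using E.smul_eq 0 fun _ => 0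

theorem N_finset_sum_le {ι : Type*} (t : Finset ι) (F : ι → G → ℝ≥0∞) :
    E.N (fun x => ∑ i ∈ t, F i x) ≤ ∑ i ∈ t, E.N (F i) := by
  classical
  induction t using Finset.induction_on with
  | empty => simp [N_zero]
  | insert i t hi ih =>
    simp only [Finset.sum_insert hi]
    exact (E.add_le _ _).trans (add_le_add le_rfl ih)

theorem N_sum_translate_le {w : G → ℝ} {C : ℝ} (hw : IsAdmissibleFor GS w E C) (t : Finset G)
    (F : G → ℝ≥0∞) :
    E.N (fun y => ∑ q ∈ t, F (y * q⁻¹)) ≤ (∑ q ∈ t, ENNReal.ofReal (w q⁻¹ / C)) * E.N F := by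
  rw [Finset.sum_mul]
  exact (E.N_finset_sum_le t _).trans (Finset.sum_le_sum fun q _ => hw.transR q⁻¹ F)

end BFSpace

end CoorbitCovers

namespace CoorbitCovers

variable {G : Type*} [Group G] [TopologicalSpace G] [IsTopologicalGroup G]
  [LocallyCompactSpace G] [SigmaCompactSpace G] [MeasurableSpace G] [BorelSpace G]

theorem statement18_general (GS : GroupSetting G)
    (hIN : ∀ x : G, (fun y => x * y * x⁻¹) '' GS.V = GS.V)
    (w : G → ℝ) (E : BFSpace GS) (Cadm : ℝ)
    (hw : IsAdmissibleFor GS w E Cadm)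
    (Λ : Subgroup G)
    (nΛ : ℕ) (hΛsep : RelSep GS (Λ : Set G) nΛ) :
    ∃ C : ℝ≥0∞, C ≠ ⊤ ∧
      ∀ c a : G → ℂ,
        EdNorm GS E (Λ : Set G) (fun l => c (l : G)) ≠ ⊤ →
        (∑' l : (Λ : Set G), (‖a (l : G)‖₊ : ℝ≥0∞) * ENNReal.ofReal (w (l : G))) ≠ ⊤ →
        EdNorm GS E (Λ : Set G)
            (fun l => ∑' m : (Λ : Set G), c (m : G) * a ((m : G)⁻¹ * (l : G))) ≤
          C * EdNorm GS E (Λ : Set G) (fun l => c (l : G)) *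
            ∑' l : (Λ : Set G), (‖a (l : G)‖₊ : ℝ≥0∞) * ENNReal.ofReal (w (l : G)) := by
  -- countability of `Λ` is what allows exchanging `∫` and `Σ_λ`
  have : Countable (Λ : Set G) := (GS.countable_of_relSep hΛsep).to_subtype
  obtain ⟨t, ht⟩ := GS.exists_finset_cover_V_mul_V
  obtain ⟨M, hM⟩ := hw.adm.locBdd _ GS.V_relCompact
  refine ⟨ENNReal.ofReal (1 / Cadm) * (∑ q ∈ t, ENNReal.ofReal (w q⁻¹ / Cadm)) * ENNReal.ofReal M,
    by simp [ENNReal.mul_eq_top], fun c a _ _ => ?_⟩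
  set K := ∑ q ∈ t, ENNReal.ofReal (w q⁻¹ / Cadm)
  set F := indicatorSum GS Λ fun m => ‖c m‖₊
  set f := fun y => ∑ q ∈ t, F (y * q⁻¹)
  set g := indicatorSum GS Λ fun n => ‖a n‖₊
  refine (ENNReal.mul_le_mul_iff_right GS.measure_V_ne_zero GS.measure_V_ne_top).1 ?_
  calc GS.μ GS.V * EdNorm GS E Λ (fun l => ∑' m : (Λ : Set G), c m * a ((m : G)⁻¹ * l))
      ≤ E.N (convE GS f g) := by
        rw [edNorm_eq_indicatorSum, ← E.smul_eq]
        exact E.mono _ _ (ae_of_all _ (measure_V_mul_indicatorSum_conv_le hIN Λ ht c a))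
    _ ≤ ENNReal.ofReal (1 / Cadm) * E.N f * L1wNorm GS w g := hw.convR f g
    _ ≤ ENNReal.ofReal (1 / Cadm) * (K * E.N F) *
          ((∑' n : (Λ : Set G), ‖a n‖₊ * ENNReal.ofReal (w n)) * ENNReal.ofReal M * GS.μ GS.V) := by
        gcongr
        · exact E.N_sum_translate_le hw t F
        · exact L1wNorm_indicatorSum_le hw.adm (fun u hu => hM u (subset_closure hu)) _
    _ = _ := by
        rw [edNorm_eq_indicatorSum]
        ring

/-- If `G` is an IN group (with `V` invariant under inner
automorphisms) and `Λ` is a discrete, closed subgroup of `G` (hence relatively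
separated), then `E_d(Λ)` is a right convolution module over `ℓ¹_w(Λ)`:
`‖c * a‖_{E_d} ≤ C ‖c‖_{E_d} ‖a‖_{ℓ¹_w}` where `(c*a)_λ = Σ_μ c_μ a_{μ⁻¹λ}`. -/
theorem statement18 (GS : GroupSetting G)
    (hIN : ∀ x : G, (fun y => x * y * x⁻¹) '' GS.V = GS.V)
    (w : G → ℝ) (E : BFSpace GS) (Cadm : ℝ)
    (hTI : IsTI GS E) (hw : IsAdmissibleFor GS w E Cadm)
    (Λ : Subgroup G) (hΛclosed : IsClosed (Λ : Set G))
    (hΛdiscrete : DiscreteTopology Λ)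
    (nΛ : ℕ) (hΛsep : RelSep GS (Λ : Set G) nΛ) :
    ∃ C : ℝ≥0∞, C ≠ ⊤ ∧
      ∀ c a : G → ℂ,
        EdNorm GS E (Λ : Set G) (fun l => c (l : G)) ≠ ⊤ →
        (∑' l : (Λ : Set G), (‖a (l : G)‖₊ : ℝ≥0∞) * ENNReal.ofReal (w (l : G))) ≠ ⊤ →
        EdNorm GS E (Λ : Set G)
            (fun l => ∑' m : (Λ : Set G), c (m : G) * a ((m : G)⁻¹ * (l : G))) ≤
          C * EdNorm GS E (Λ : Set G) (fun l => c (l : G)) *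
            ∑' l : (Λ : Set G), (‖a (l : G)‖₊ : ℝ≥0∞) * ENNReal.ofReal (w (l : G)) :=
  statement18_general GS hIN w E Cadm hw Λ nΛ hΛsep

end CoorbitCovers
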